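/- arXiv:2409.01819 — 3 statements merged into one kernel-verified Lean document; each statement's English description precedes it below -/
import Mathlib

section
/- Let X be an N×n random matrix with i.i.d. entries satisfying P(|x_11| > t) ≤ C_u t^{-α} for t ≥ T_0, with α > 2. Define the set D = {(i,j) : |x_ij| > N^{1/2 - c}} for a constant c ∈ (0,1/2). Then there exist constants c, c' ∈ (0,1/2) depending only on α such that for all sufficiently large n, P(|D| > N^{1-c'}) ≤ N^{-((α-2)/4)·N^{1-c'}}. -/
/-!
Union bound over the `k`-subsets of entries: the event that more than `N^{1-c}` entries exceed
`N^{1/2-c}` is covered by the events that all entries of some set of `k = ⌊N^{1-c}⌋ + 1` entries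
do, each of probability at most `(C_u N^{-(1/2-c)α})^k` by independence. With `C(Nn, k) ≤ (eNn/k)^k`
and `Nn ≤ N²`, the union bound is at most `(e C_u N^{1+c-(1/2-c)α})^k`, and for
`c = (α-2)/(8(α+1))` the exponent is `-3(α-2)/8`; the spare `N^{(α-2)/8}` absorbs `e C_u`.
-/

open MeasureTheory ProbabilityTheory Filter Finset Real
open scoped ENNReal Nat

theorem Nat.choose_le_exp_one_mul_div_pow (M k : ℕ) :
    (M.choose k : ℝ) ≤ (exp 1 * M / k) ^ k := by
  have hk_pow : (k : ℝ) ^ k / k ! ≤ exp k := pow_div_factorial_le_exp _ k.cast_nonneg k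
  calc (M.choose k : ℝ) ≤ (M : ℝ) ^ k / k ! := Nat.choose_le_pow_div k M
    _ = (M : ℝ) ^ k / (k : ℝ) ^ k * ((k : ℝ) ^ k / k !) := by
        rcases k.eq_zero_or_pos with rfl | hk
        · simp
        · field_simp
    _ ≤ (M : ℝ) ^ k / (k : ℝ) ^ k * exp k := by gcongr
    _ = (exp 1 * M / k) ^ k := by rw [div_pow, mul_pow, exp_one_pow]; ring

theorem choose_mul_pow_le_rpow {M k : ℕ} {q N β v : ℝ} (hq : 0 ≤ q) (hN : 1 ≤ N) (hβ : 0 ≤ β)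
    (hv : v ≤ k) (h : exp 1 * M / k * q ≤ N ^ (-β)) :
    (M.choose k : ℝ) * q ^ k ≤ N ^ (-β * v) :=
  calc (M.choose k : ℝ) * q ^ k ≤ (exp 1 * M / k) ^ k * q ^ k := by
        gcongr; exact Nat.choose_le_exp_one_mul_div_pow M k
    _ = (exp 1 * M / k * q) ^ k := (mul_pow _ _ _).symm
    _ ≤ (N ^ (-β)) ^ k := by gcongr
    _ = N ^ (-β * k) := by rw [← rpow_natCast, ← rpow_mul (by linarith)]
    _ ≤ N ^ (-β * v) := rpow_le_rpow_of_exponent_le hN (by nlinarith)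

theorem exp_one_mul_div_mul_tail_le_rpow {α c Cu N : ℝ} {M k : ℕ} (hc : c * (α + 1) = (α - 2) / 8)
    (hN : 0 < N) (hCuN : exp 1 * Cu ≤ N ^ ((α - 2) / 8)) (hM : (M : ℝ) ≤ N ^ 2)
    (hk : N ^ (1 - c) ≤ k) :
    exp 1 * M / k * (Cu * (N ^ ((1 : ℝ) / 2 - c)) ^ (-α)) ≤ N ^ (-((α - 2) / 4)) := by
  have hNc : 0 < N ^ (1 - c) := rpow_pos_of_pos hN _
  calc exp 1 * M / k * (Cu * (N ^ ((1 : ℝ) / 2 - c)) ^ (-α))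
      = exp 1 * Cu * ((M : ℝ) / k * N ^ ((1 / 2 - c) * -α)) := by
        rw [rpow_mul hN.le]; ring
    _ ≤ N ^ ((α - 2) / 8) * (N ^ (2 : ℝ) / N ^ (1 - c) * N ^ ((1 / 2 - c) * -α)) := by
        rw [rpow_two]; gcongr
    _ = N ^ (-((α - 2) / 4)) := by
        rw [← rpow_sub hN, ← rpow_add hN, ← rpow_add hN]
        congr 1
        linear_combination hc

theorem ProbabilityTheory.iIndepFun.measure_le_natCard_le {ι Ω β : Type*} [Fintype ι]
    [MeasurableSpace Ω] [MeasurableSpace β] {μ : Measure Ω} {X : ι → Ω → β} (hX : iIndepFun X μ)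
    {s : ι → Set β} (hs : ∀ i, MeasurableSet (s i)) {q : ℝ≥0∞} (hq : ∀ i, μ (X i ⁻¹' s i) ≤ q)
    (k : ℕ) :
    μ {ω | k ≤ Nat.card {i // X i ω ∈ s i}} ≤ (Fintype.card ι).choose k * q ^ k := by
  classical
  have hcover : {ω | k ≤ Nat.card {i // X i ω ∈ s i}} ⊆
      ⋃ S ∈ powersetCard k (univ : Finset ι), ⋂ i ∈ S, X i ⁻¹' s i := by
    intro ω (hω : k ≤ Nat.card _)
    rw [Nat.card_eq_fintype_card, Fintype.card_subtype] at hω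
    obtain ⟨S, hS, rfl⟩ := exists_subset_card_eq hω
    exact Set.mem_biUnion (mem_powersetCard.2 ⟨subset_univ S, rfl⟩)
      (Set.mem_iInter₂.2 fun i hi => (mem_filter.1 (hS hi)).2)
  calc μ {ω | k ≤ Nat.card {i // X i ω ∈ s i}}
      ≤ μ (⋃ S ∈ powersetCard k (univ : Finset ι), ⋂ i ∈ S, X i ⁻¹' s i) := measure_mono hcover
    _ ≤ ∑ S ∈ powersetCard k (univ : Finset ι), μ (⋂ i ∈ S, X i ⁻¹' s i) :=
        measure_biUnion_finset_le _ _
    _ ≤ ∑ S ∈ powersetCard k (univ : Finset ι), q ^ k := by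
        refine sum_le_sum fun S hS => ?_
        rw [hX.measure_inter_preimage_eq_mul S fun i _ => hs i, ← (mem_powersetCard.1 hS).2]
        exact prod_le_pow_card _ _ _ fun i _ => hq i
    _ = (Fintype.card ι).choose k * q ^ k := by
        rw [sum_const, card_powersetCard, card_univ, nsmul_eq_mul]

theorem tendsto_natCeil_mul_atTop {a : ℝ} (ha : 0 < a) :
    Tendsto (fun n : ℕ => (⌈a * n⌉₊ : ℝ)) atTop atTop :=
  tendsto_atTop_mono (fun _ => Nat.le_ceil _)
    (tendsto_natCast_atTop_atTop.const_mul_atTop ha)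

theorem eventually_le_natCeil_mul_rpow {a p : ℝ} (ha : 0 < a) (hp : 0 < p) (C : ℝ) :
    ∀ᶠ n : ℕ in atTop, C ≤ (⌈a * n⌉₊ : ℝ) ^ p :=
  ((tendsto_rpow_atTop hp).comp (tendsto_natCeil_mul_atTop ha)).eventually_ge_atTop C

theorem Nat.le_ceil_mul_of_one_le {a : ℝ} (ha : 1 ≤ a) (n : ℕ) : n ≤ ⌈a * n⌉₊ := by
  exact_mod_cast (le_mul_of_one_le_left n.cast_nonneg ha).trans (Nat.le_ceil (a * n))

theorem few_large_entries_general
    (α Cu T₀ a : ℝ) (hα : 2 < α) (hCu : 0 < Cu) (ha : 1 < a) :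
    ∃ c ∈ Set.Ioo (0 : ℝ) (1/2), ∃ c' ∈ Set.Ioo (0 : ℝ) (1/2), ∃ n₀ : ℕ,
      ∀ n : ℕ, n₀ ≤ n →
      ∀ (Ω : Type) (_ : MeasurableSpace Ω) (μ : Measure Ω), IsProbabilityMeasure μ →
      ∀ x : Fin ⌈a * n⌉₊ → Fin n → Ω → ℝ,
        (∀ i j, Measurable (x i j)) →
        iIndepFun
          (fun p : Fin ⌈a * n⌉₊ × Fin n => x p.1 p.2) μ →
        (∀ i j i' j', IdentDistrib (x i j) (x i' j') μ μ) →
        (∀ i j, ∀ t : ℝ, T₀ ≤ t →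
          μ {ω | t < |x i j ω|} ≤ ENNReal.ofReal (Cu * t ^ (-α))) →
        μ {ω | ((⌈a * n⌉₊ : ℝ)) ^ (1 - c') <
            (Nat.card {p : Fin ⌈a * n⌉₊ × Fin n //
              ((⌈a * n⌉₊ : ℝ)) ^ ((1 : ℝ)/2 - c) < |x p.1 p.2 ω|} : ℝ)}
          ≤ ENNReal.ofReal
              (((⌈a * n⌉₊ : ℝ)) ^ (-((α - 2)/4) * ((⌈a * n⌉₊ : ℝ)) ^ (1 - c'))) := by
  set c : ℝ := (α - 2) / (8 * (α + 1)) with hc_def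
  have hc : c * (α + 1) = (α - 2) / 8 := by rw [hc_def]; field_simp
  have hc_mem : c ∈ Set.Ioo (0 : ℝ) (1/2) :=
    ⟨by rw [hc_def]; exact div_pos (by linarith) (by linarith), by nlinarith⟩
  have ha₀ : 0 < a := by linarith
  obtain ⟨n₀, hn₀⟩ := eventually_atTop.1 <|
    (eventually_le_natCeil_mul_rpow ha₀ (sub_pos.2 hc_mem.2) T₀).and <|
    (eventually_le_natCeil_mul_rpow ha₀ (by linarith : (0 : ℝ) < (α - 2) / 8) (exp 1 * Cu)).and <|
    (tendsto_natCeil_mul_atTop ha₀).eventually_ge_atTop 1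
  refine ⟨c, hc_mem, c, hc_mem, n₀, fun n hn Ω _ μ _ x _ hindep _ htail => ?_⟩
  obtain ⟨hT, hCuN, hN1⟩ := hn₀ n hn
  set N : ℝ := (⌈a * n⌉₊ : ℝ)
  set k := ⌊N ^ (1 - c)⌋₊ + 1
  have hk : N ^ (1 - c) ≤ k := by simpa [k] using (Nat.lt_floor_add_one (N ^ (1 - c))).le
  have hM : ((⌈a * n⌉₊ * n : ℕ) : ℝ) ≤ N ^ 2 := by
    rw [sq, Nat.cast_mul]; gcongr; exact Nat.cast_le.2 (Nat.le_ceil_mul_of_one_le ha.le n)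
  simp only [fun m : ℕ => (Nat.floor_lt (n := m) (by positivity : 0 ≤ N ^ (1 - c))).symm]
  calc μ {ω | k ≤ Nat.card {p : Fin ⌈a * n⌉₊ × Fin n // N ^ ((1 : ℝ) / 2 - c) < |x p.1 p.2 ω|}}
      ≤ ((⌈a * n⌉₊ * n).choose k) * ENNReal.ofReal (Cu * (N ^ ((1 : ℝ) / 2 - c)) ^ (-α)) ^ k := by
        simpa using hindep.measure_le_natCard_le
          (fun _ => measurableSet_lt measurable_const measurable_abs)
          (fun p => htail p.1 p.2 _ hT) k
    _ = ENNReal.ofReal (((⌈a * n⌉₊ * n).choose k) * (Cu * (N ^ ((1 : ℝ) / 2 - c)) ^ (-α)) ^ k) := by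
        rw [← ENNReal.ofReal_pow (by positivity), ← ENNReal.ofReal_natCast,
          ← ENNReal.ofReal_mul (by positivity)]
    _ ≤ _ := ENNReal.ofReal_le_ofReal <| choose_mul_pow_le_rpow (by positivity) hN1
        (by linarith) hk (exp_one_mul_div_mul_tail_le_rpow hc (by positivity) hCuN hM hk)

/-- Proposition 4.1: for an `N×n` matrix with i.i.d. entries having tail
`P(|x₁₁| > t) ≤ C_u t^{-α}` (`t ≥ T₀`) with `α > 2` and `N = ⌈a·n⌉`, there are constants
`c, c' ∈ (0,1/2)` depending only on `α` such that for large `n`, the number of entries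
exceeding `N^{1/2-c}` is at most `N^{1-c'}` except with probability
`N^{-((α-2)/4)·N^{1-c'}}`. -/
theorem few_large_entries
    (α Cu T₀ a : ℝ) (hα : 2 < α) (hCu : 0 < Cu) (hT₀ : 0 < T₀) (ha : 1 < a) :
    ∃ c ∈ Set.Ioo (0 : ℝ) (1/2), ∃ c' ∈ Set.Ioo (0 : ℝ) (1/2), ∃ n₀ : ℕ,
      ∀ n : ℕ, n₀ ≤ n →
      ∀ (Ω : Type) (_ : MeasurableSpace Ω) (μ : Measure Ω), IsProbabilityMeasure μ →
      ∀ x : Fin ⌈a * n⌉₊ → Fin n → Ω → ℝ,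
        (∀ i j, Measurable (x i j)) →
        iIndepFun
          (fun p : Fin ⌈a * n⌉₊ × Fin n => x p.1 p.2) μ →
        (∀ i j i' j', IdentDistrib (x i j) (x i' j') μ μ) →
        (∀ i j, ∀ t : ℝ, T₀ ≤ t →
          μ {ω | t < |x i j ω|} ≤ ENNReal.ofReal (Cu * t ^ (-α))) →
        μ {ω | ((⌈a * n⌉₊ : ℝ)) ^ (1 - c') <
            (Nat.card {p : Fin ⌈a * n⌉₊ × Fin n //
              ((⌈a * n⌉₊ : ℝ)) ^ ((1 : ℝ)/2 - c) < |x p.1 p.2 ω|} : ℝ)}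
          ≤ ENNReal.ofReal
              (((⌈a * n⌉₊ : ℝ)) ^ (-((α - 2)/4) * ((⌈a * n⌉₊ : ℝ)) ^ (1 - c'))) :=
  few_large_entries_general α Cu T₀ a hα hCu ha
end

section
/- Let y ∈ S^{n-1} and suppose the index set I = {i ∈ [n] : |y_i| > b} satisfies ‖y_{I^c}‖_2² > δ for constants b > 0, δ ∈ (0,1). Then for any integer m with 1 ≤ m ≤ n, there exists a subset J ⊆ [n] with |J| ≤ m, ‖y_J‖_2² ≥ δ/⌈n/m⌉, and ‖y_J‖_∞ ≤ b. -/
open Finset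

/-- If `y ∈ S^{n-1}` and the coordinates of `y` bounded by `b` carry squared mass more
than `δ`, then for any `1 ≤ m ≤ n` there is a subset `J` of at most `m` coordinates, all
bounded by `b`, with squared mass at least `δ / ⌈n/m⌉`. -/
theorem exists_sparse_block (n : ℕ) (y : Fin n → ℝ) (hy : ∑ i, y i ^ 2 = 1)
    (b δ : ℝ) (hb : 0 < b) (hδ : δ ∈ Set.Ioo (0 : ℝ) 1)
    (hmass : δ < ∑ i ∈ Finset.univ.filter (fun i : Fin n => ¬ b < |y i|), y i ^ 2) :
    ∀ m : ℕ, 1 ≤ m → m ≤ n →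
      ∃ J : Finset (Fin n), J.card ≤ m
        ∧ δ / (⌈(n : ℝ) / m⌉₊ : ℝ) ≤ ∑ i ∈ J, y i ^ 2
        ∧ ∀ i ∈ J, |y i| ≤ b := by
  intro m hm1 hmn
  set k := ⌈(n : ℝ) / m⌉₊ with hkdef
  have hm0 : 0 < m := hm1
  have hn0 : 0 < n := lt_of_lt_of_le hm0 hmn
  have hk0 : 0 < k := by
    rw [hkdef]
    apply Nat.ceil_pos.2
    positivity
  have hkR : (0 : ℝ) < (k : ℝ) := by exact_mod_cast hk0
  have hnmk : n ≤ k * m := by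
    have h1 : (n : ℝ) / m ≤ k := Nat.le_ceil _
    have h2 : (n : ℝ) ≤ (k : ℝ) * m := by
      rw [div_le_iff₀ (by positivity : (0:ℝ) < (m:ℝ))] at h1
      linarith
    exact_mod_cast h2
  set T := Finset.univ.filter (fun i : Fin n => ¬ b < |y i|) with hT
  set f : Fin n → Fin k := fun i => ⟨i.val / m, by
    rw [Nat.div_lt_iff_lt_mul hm0]
    exact lt_of_lt_of_le i.isLt hnmk⟩ with hf
  have hsplit : ∑ j : Fin k, ∑ i ∈ T.filter (fun i => f i = j), y i ^ 2
      = ∑ i ∈ T, y i ^ 2 := Finset.sum_fiberwise T f (fun i => y i ^ 2)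
  have hex : ∃ j : Fin k, δ / k ≤ ∑ i ∈ T.filter (fun i => f i = j), y i ^ 2 := by
    by_contra h
    push_neg at h
    have hlt : ∑ i ∈ T, y i ^ 2 ≤ ∑ _j : Fin k, (δ / k) := by
      rw [← hsplit]
      exact Finset.sum_le_sum fun j _ => le_of_lt (h j)
    have : ∑ _j : Fin k, (δ / k) = δ := by
      rw [Finset.sum_const, Finset.card_univ, Fintype.card_fin, nsmul_eq_mul,
        mul_div_cancel₀ _ (ne_of_gt hkR)]
    rw [this] at hlt
    linarith
  obtain ⟨j, hj⟩ := hex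
  refine ⟨T.filter (fun i => f i = j), ?_, hj, ?_⟩
  · have hsub : T.filter (fun i => f i = j) ⊆ Finset.univ.filter (fun i => f i = j) := by
      intro i hi
      simp only [Finset.mem_filter] at hi ⊢
      exact ⟨Finset.mem_univ i, hi.2⟩
    refine le_trans (Finset.card_le_card hsub) ?_
    have : (Finset.univ.filter (fun i => f i = j)).card ≤ (Finset.range m).card := by
      apply Finset.card_le_card_of_injOn (fun i => i.val % m)
      · intro i hi
        exact Finset.mem_range.2 (Nat.mod_lt _ hm0)
      · intro a ha b hb hab
        simp only [Finset.mem_coe, Finset.mem_filter] at ha hb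
        have ha' : a.val / m = j.val := congrArg Fin.val ha.2
        have hb' : b.val / m = j.val := congrArg Fin.val hb.2
        simp only at hab
        have : a.val = b.val := by
          rw [← Nat.div_add_mod a.val m, ← Nat.div_add_mod b.val m, ha', hb', hab]
        exact Fin.ext this
    simpa using this
  · intro i hi
    rw [hT] at hi
    simp only [Finset.mem_filter] at hi
    exact not_lt.mp hi.1.2
end

section
/- Let x₁, ..., x_n be i.i.d. bounded random variables with |x_j| ≤ M, mean zero, and E[x_j²] ≤ p where p = N^{-1+αε} for parameters α, ε > 0 and n ≤ N ≤ a·n. Then for any q ≥ 2, E[(Σ_{j=1}^n x_j²)^{q/2}] ≤ C^q·((N^{αε})^{q/2} + q^{q/2}·N + q^{q/4}·(N^{αε})^{q/4}) for a constant C depending on M and a, but not on q or N. -/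
/-!
Put `yⱼ = xⱼ²`, independent with values in `[0, M²]`, and `S = ∑ⱼ yⱼ`, whose mean is at most
`n · N^{-1+αε} ≤ N^{αε}`. Expanding `(S + c)^{k+1} = c (S + c)^k + ∑ⱼ yⱼ (S + c)^k` and bounding
`S ≤ (S - yⱼ) + M²` in the second factor makes `yⱼ` independent of the rest, so induction on `k`
gives `E (S + c)^k ≤ (E S + c + k M²)^k`. Jensen's inequality for the concave map `t ↦ t^{q/(2k)}`
with `k = ⌈q/2⌉` passes to the exponent `q/2`, and then
`(E S + k M²)^{q/2} ≤ ((M² + 1)(N^{αε} + q))^{q/2} ≤ (2 (M² + 1))^{q/2} (N^{αε q/2} + q^{q/2})`.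
-/

open MeasureTheory ProbabilityTheory

section

variable {Ω : Type*} [MeasurableSpace Ω] {μ : Measure Ω} {ι : Type*} {y : ι → Ω → ℝ} {B c : ℝ}

lemma integrable_of_nonneg_of_le [IsFiniteMeasure μ] {f : Ω → ℝ} {K : ℝ}
    (hf : AEStronglyMeasurable f μ) (h0 : ∀ ω, 0 ≤ f ω) (hK : ∀ ω, f ω ≤ K) : Integrable f μ :=
  .of_bound hf K <| ae_of_all _ fun ω => by rw [Real.norm_of_nonneg (h0 ω)]; exact hK ω

lemma integral_rpow_le_integral_pow_rpow [IsProbabilityMeasure μ] {f : Ω → ℝ} {K : ℝ}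
    (hf : Measurable f) (h0 : ∀ ω, 0 ≤ f ω) (hK : ∀ ω, f ω ≤ K) {r : ℝ} {k : ℕ}
    (hr : 0 < r) (hrk : r ≤ k) :
    ∫ ω, f ω ^ r ∂μ ≤ (∫ ω, f ω ^ k ∂μ) ^ (r / k) := by
  have hk : (0 : ℝ) < k := hr.trans_le hrk
  have hθ : 0 ≤ r / k := by positivity
  have hpow : ∀ ω, f ω ^ r = (f ω ^ k) ^ (r / k) := fun ω => by
    rw [← Real.rpow_natCast, ← Real.rpow_mul (h0 ω), mul_div_cancel₀ _ hk.ne']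
  simp_rw [hpow]
  have hpow_le : ∀ ω, f ω ^ k ≤ K ^ k := fun ω => pow_le_pow_left₀ (h0 ω) (hK ω) k
  refine (Real.concaveOn_rpow hθ ((div_le_one hk).2 hrk)).le_map_integral
    (Real.continuous_rpow_const hθ).continuousOn isClosed_Ici
    (ae_of_all _ fun ω => pow_nonneg (h0 ω) k)
    (integrable_of_nonneg_of_le (hf.pow_const k).aestronglyMeasurable
      (fun ω => pow_nonneg (h0 ω) k) hpow_le) ?_
  exact integrable_of_nonneg_of_le ((hf.pow_const k).pow_const _).aestronglyMeasurable
    (fun ω => Real.rpow_nonneg (pow_nonneg (h0 ω) k) _)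
    (fun ω => Real.rpow_le_rpow (pow_nonneg (h0 ω) k) (hpow_le ω) hθ)

lemma integrable_sum_add_pow [IsFiniteMeasure μ] (hmeas : ∀ i, Measurable (y i))
    (h0 : ∀ i ω, 0 ≤ y i ω)
    (hB : ∀ i ω, y i ω ≤ B) (hc : 0 ≤ c) (s : Finset ι) (k : ℕ) :
    Integrable (fun ω => (∑ i ∈ s, y i ω + c) ^ k) μ := by
  have hsum0 : ∀ ω, 0 ≤ ∑ i ∈ s, y i ω + c := fun ω =>
    add_nonneg (Finset.sum_nonneg fun i _ => h0 i ω) hc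
  refine integrable_of_nonneg_of_le (by fun_prop) (fun ω => pow_nonneg (hsum0 ω) k)
    (K := (s.card • B + c) ^ k) fun ω => pow_le_pow_left₀ (hsum0 ω) ?_ k
  exact add_le_add_left (Finset.sum_le_card_nsmul _ _ _ fun i _ => hB i ω) c

lemma integrable_mul_sum_add_pow [IsFiniteMeasure μ] (hmeas : ∀ i, Measurable (y i))
    (h0 : ∀ i ω, 0 ≤ y i ω)
    (hB : ∀ i ω, y i ω ≤ B) (hc : 0 ≤ c) (j : ι) (s : Finset ι) (k : ℕ) :
    Integrable (fun ω => y j ω * (∑ i ∈ s, y i ω + c) ^ k) μ :=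
  (integrable_sum_add_pow hmeas h0 hB hc s k).bdd_mul (hmeas j).aestronglyMeasurable
    (ae_of_all _ fun ω => by rw [Real.norm_of_nonneg (h0 j ω)]; exact hB j ω)

lemma integral_mul_sum_add_pow_le [IsProbabilityMeasure μ] [Fintype ι]
    (hmeas : ∀ i, Measurable (y i)) (hindep : iIndepFun y μ) (h0 : ∀ i ω, 0 ≤ y i ω)
    (hB : ∀ i ω, y i ω ≤ B) (hc : 0 ≤ c) (j : ι) (k : ℕ) :
    ∫ ω, y j ω * (∑ i, y i ω + c) ^ k ∂μ
      ≤ (∫ ω, y j ω ∂μ) * ∫ ω, (∑ i, y i ω + (c + B)) ^ k ∂μ := by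
  classical
  obtain ⟨ω₀⟩ := nonempty_of_isProbabilityMeasure μ
  have hcB : 0 ≤ c + B := add_nonneg hc ((h0 j ω₀).trans (hB j ω₀))
  set s := Finset.univ.erase j
  have hsplit : ∀ ω, ∑ i ∈ s, y i ω + y j ω = ∑ i, y i ω := fun ω =>
    Finset.sum_erase_add _ _ (Finset.mem_univ j)
  have hindep_j : IndepFun (y j) (fun ω => (∑ i ∈ s, y i ω + (c + B)) ^ k) μ := by
    have h := (hindep.indepFun_finsetSum_of_notMem hmeas (s := s) (Finset.notMem_erase j _)).symm
    simpa only [Function.comp_def, Finset.sum_apply, id] using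
      h.comp measurable_id ((measurable_id.add_const (c + B)).pow_const k)
  calc ∫ ω, y j ω * (∑ i, y i ω + c) ^ k ∂μ
      ≤ ∫ ω, y j ω * (∑ i ∈ s, y i ω + (c + B)) ^ k ∂μ := by
        refine integral_mono (integrable_mul_sum_add_pow hmeas h0 hB hc j _ k)
          (integrable_mul_sum_add_pow hmeas h0 hB hcB j _ k) fun ω => ?_
        have hS0 := Finset.sum_nonneg fun i (_ : i ∈ Finset.univ) => h0 i ω
        refine mul_le_mul_of_nonneg_left (pow_le_pow_left₀ (by linarith) ?_ k) (h0 j ω)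
        linarith [hsplit ω, hB j ω]
    _ = (∫ ω, y j ω ∂μ) * ∫ ω, (∑ i ∈ s, y i ω + (c + B)) ^ k ∂μ :=
        hindep_j.integral_fun_mul_eq_mul_integral (hmeas j).aestronglyMeasurable
          (integrable_sum_add_pow hmeas h0 hB hcB s k).aestronglyMeasurable
    _ ≤ (∫ ω, y j ω ∂μ) * ∫ ω, (∑ i, y i ω + (c + B)) ^ k ∂μ := by
        refine mul_le_mul_of_nonneg_left (integral_mono (integrable_sum_add_pow hmeas h0 hB hcB _ k)
          (integrable_sum_add_pow hmeas h0 hB hcB _ k) fun ω => ?_) (integral_nonneg (h0 j))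
        have hT0 := Finset.sum_nonneg fun i (_ : i ∈ s) => h0 i ω
        exact pow_le_pow_left₀ (by linarith) (by linarith [hsplit ω, h0 j ω]) k

lemma integral_sum_add_pow_le [IsProbabilityMeasure μ] [Fintype ι]
    (hmeas : ∀ i, Measurable (y i)) (hindep : iIndepFun y μ) (h0 : ∀ i ω, 0 ≤ y i ω)
    (hB : ∀ i ω, y i ω ≤ B) (hB0 : 0 ≤ B) (hc : 0 ≤ c) (k : ℕ) :
    ∫ ω, (∑ i, y i ω + c) ^ k ∂μ ≤ (∑ i, ∫ ω, y i ω ∂μ + c + k * B) ^ k := by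
  induction k generalizing c with
  | zero => simp
  | succ k ih =>
    set m := ∑ i, ∫ ω, y i ω ∂μ
    set D := m + c + (k + 1 : ℕ) * B
    have hm : 0 ≤ m := Finset.sum_nonneg fun i _ => integral_nonneg (h0 i)
    have hkB : 0 ≤ (k : ℝ) * B := mul_nonneg k.cast_nonneg hB0
    have hD : 0 ≤ D := by positivity
    have ih_le : ∀ c', c ≤ c' → c' ≤ c + B → ∫ ω, (∑ i, y i ω + c') ^ k ∂μ ≤ D ^ k :=
      fun c' h1 h2 => (ih (hc.trans h1)).trans
        (pow_le_pow_left₀ (by linarith) (by push_cast [D]; linarith) k)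
    have hexpand : ∀ ω, (∑ i, y i ω + c) ^ (k + 1)
        = c * (∑ i, y i ω + c) ^ k + ∑ j, y j ω * (∑ i, y i ω + c) ^ k := fun ω => by
      rw [pow_succ, ← Finset.sum_mul]; ring
    have hint := fun j => integrable_mul_sum_add_pow (μ := μ) hmeas h0 hB hc j Finset.univ k
    calc ∫ ω, (∑ i, y i ω + c) ^ (k + 1) ∂μ
        = c * ∫ ω, (∑ i, y i ω + c) ^ k ∂μ + ∑ j, ∫ ω, y j ω * (∑ i, y i ω + c) ^ k ∂μ := by
          simp_rw [hexpand]
          rw [integral_add ((integrable_sum_add_pow hmeas h0 hB hc _ k).const_mul c)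
              (integrable_finsetSum _ fun j _ => hint j), integral_const_mul,
            integral_finsetSum _ fun j _ => hint j]
      _ ≤ c * D ^ k + ∑ j, (∫ ω, y j ω ∂μ) * D ^ k := by
          gcongr with j
          · exact ih_le c le_rfl (by linarith)
          · exact (integral_mul_sum_add_pow_le hmeas hindep h0 hB hc j k).trans
              (mul_le_mul_of_nonneg_left (ih_le _ (by linarith) le_rfl) (integral_nonneg (h0 j)))
      _ = (c + m) * D ^ k := by rw [← Finset.sum_mul]; ring
      _ ≤ D ^ (k + 1) := by
          rw [pow_succ']
          exact mul_le_mul_of_nonneg_right (by push_cast [D]; linarith) (pow_nonneg hD k)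

lemma integral_sum_rpow_le [IsProbabilityMeasure μ] [Fintype ι]
    (hmeas : ∀ i, Measurable (y i)) (hindep : iIndepFun y μ) (h0 : ∀ i ω, 0 ≤ y i ω)
    (hB : ∀ i ω, y i ω ≤ B) (hB0 : 0 ≤ B) {r : ℝ} (hr : 0 < r) :
    ∫ ω, (∑ i, y i ω) ^ r ∂μ ≤ (∑ i, ∫ ω, y i ω ∂μ + ⌈r⌉₊ * B) ^ r := by
  set k := ⌈r⌉₊
  have hk : (0 : ℝ) < k := hr.trans_le (Nat.le_ceil r)
  have hD : 0 ≤ ∑ i, ∫ ω, y i ω ∂μ + k * B := by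
    have hm : 0 ≤ ∑ i, ∫ ω, y i ω ∂μ := Finset.sum_nonneg fun i _ => integral_nonneg (h0 i)
    positivity
  have hmoment := integral_sum_add_pow_le hmeas hindep h0 hB hB0 le_rfl k (c := 0)
  simp only [add_zero] at hmoment
  calc ∫ ω, (∑ i, y i ω) ^ r ∂μ ≤ (∫ ω, (∑ i, y i ω) ^ k ∂μ) ^ (r / k) :=
        integral_rpow_le_integral_pow_rpow (by fun_prop)
          (fun ω => Finset.sum_nonneg fun i _ => h0 i ω)
          (fun ω => Finset.sum_le_card_nsmul _ _ _ fun i _ => hB i ω) hr (Nat.le_ceil r)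
    _ ≤ ((∑ i, ∫ ω, y i ω ∂μ + k * B) ^ k) ^ (r / k) :=
        Real.rpow_le_rpow (integral_nonneg fun ω => pow_nonneg
          (Finset.sum_nonneg fun i _ => h0 i ω) k) hmoment (by positivity)
    _ = (∑ i, ∫ ω, y i ω ∂μ + k * B) ^ r := by
        rw [← Real.rpow_natCast, ← Real.rpow_mul hD, mul_div_cancel₀ _ hk.ne']

end

lemma add_rpow_le_two_rpow_mul {a b p : ℝ} (ha : 0 ≤ a) (hb : 0 ≤ b) (hp : 1 ≤ p) :
    (a + b) ^ p ≤ 2 ^ p * (a ^ p + b ^ p) := by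
  have h := NNReal.rpow_add_le_mul_rpow_add_rpow ⟨a, ha⟩ ⟨b, hb⟩ hp
  have h' : (a + b) ^ p ≤ 2 ^ (p - 1) * (a ^ p + b ^ p) := by exact_mod_cast h
  refine h'.trans (mul_le_mul_of_nonneg_right ?_ (by positivity))
  exact Real.rpow_le_rpow_of_exponent_le one_le_two (by linarith)

lemma natCast_mul_rpow_neg_one_add_le {n N : ℕ} {s : ℝ} (hnN : (n : ℝ) ≤ N) (hN : (0 : ℝ) < N) :
    n * (N : ℝ) ^ (-1 + s) ≤ (N : ℝ) ^ s :=
  calc n * (N : ℝ) ^ (-1 + s) ≤ N * (N : ℝ) ^ (-1 + s) := by gcongr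
    _ = (N : ℝ) ^ s := by
      rw [Real.rpow_add hN, Real.rpow_neg_one, ← mul_assoc, mul_inv_cancel₀ hN.ne', one_mul]

lemma mul_add_rpow_half_le {K P q : ℝ} (hK : 0 ≤ K) (hP : 0 ≤ P) (hq : 2 ≤ q) :
    ((K + 1) * (P + q)) ^ (q / 2) ≤ (2 * (K + 1)) ^ q * (P ^ (q / 2) + q ^ (q / 2)) :=
  calc ((K + 1) * (P + q)) ^ (q / 2)
      ≤ (K + 1) ^ (q / 2) * (2 ^ (q / 2) * (P ^ (q / 2) + q ^ (q / 2))) := by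
        rw [Real.mul_rpow (by positivity) (by positivity)]
        gcongr
        exact add_rpow_le_two_rpow_mul hP (by positivity) (by linarith)
    _ = (2 * (K + 1)) ^ (q / 2) * (P ^ (q / 2) + q ^ (q / 2)) := by
        rw [Real.mul_rpow (by norm_num) (by positivity)]; ring
    _ ≤ (2 * (K + 1)) ^ q * (P ^ (q / 2) + q ^ (q / 2)) := by
        gcongr
        · linarith
        · linarith

theorem row_norm_moment_bound_general (M a : ℝ) :
    ∃ C : ℝ, 0 < C ∧
      ∀ (α ε : ℝ), 0 < α → 0 < ε →
      ∀ (N n : ℕ), 0 < n → n ≤ N → (N : ℝ) ≤ a * n →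
      ∀ {Ω : Type} [MeasurableSpace Ω] (μ : Measure Ω), IsProbabilityMeasure μ →
      ∀ x : Fin n → Ω → ℝ, (∀ j, Measurable (x j)) →
        iIndepFun x μ →
        (∀ j ω, |x j ω| ≤ M) →
        (∀ j, ∫ ω, x j ω ∂μ = 0) →
        (∀ j, ∫ ω, (x j ω) ^ 2 ∂μ ≤ (N : ℝ) ^ (-1 + α * ε)) →
      ∀ q : ℝ, 2 ≤ q →
        ∫ ω, (∑ j, (x j ω) ^ 2) ^ (q / 2) ∂μ
          ≤ C ^ q * (((N : ℝ) ^ (α * ε)) ^ (q / 2) + q ^ (q / 2) * N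
              + q ^ (q / 4) * ((N : ℝ) ^ (α * ε)) ^ (q / 4)) := by
  refine ⟨2 * (M ^ 2 + 1), by positivity, ?_⟩
  intro α ε _ _ N n hn hnN _ Ω _ μ _ x hxm hxi hxM _ hxvar q hq
  set P := (N : ℝ) ^ (α * ε)
  have hN : (1 : ℝ) ≤ N := by exact_mod_cast hn.trans_le hnN
  have hm : ∑ j, ∫ ω, x j ω ^ 2 ∂μ ≤ P := calc
    _ ≤ n * (N : ℝ) ^ (-1 + α * ε) := by
      simpa using Finset.sum_le_card_nsmul _ _ _ fun j (_ : j ∈ Finset.univ) => hxvar j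
    _ ≤ P := natCast_mul_rpow_neg_one_add_le (by exact_mod_cast hnN) (by positivity)
  have hk : (⌈q / 2⌉₊ : ℝ) ≤ q := (Nat.ceil_lt_add_one (by linarith)).le.trans (by linarith)
  have hP : 0 ≤ P := by positivity
  have hqN : q ^ (q / 2) ≤ q ^ (q / 2) * N := le_mul_of_one_le_right (by positivity) hN
  have h3 : 0 ≤ q ^ (q / 4) * P ^ (q / 4) := by positivity
  calc _ ≤ (∑ j, ∫ ω, x j ω ^ 2 ∂μ + ⌈q / 2⌉₊ * M ^ 2) ^ (q / 2) :=
        integral_sum_rpow_le (y := fun j ω => x j ω ^ 2) (fun j => (hxm j).pow_const 2)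
          (hxi.comp _ fun _ => measurable_id.pow_const 2) (fun _ _ => sq_nonneg _)
          (fun j ω => sq_le_sq' (abs_le.1 (hxM j ω)).1 (abs_le.1 (hxM j ω)).2)
          (sq_nonneg M) (by linarith)
    _ ≤ ((M ^ 2 + 1) * (P + q)) ^ (q / 2) := by
        gcongr
        nlinarith [mul_le_mul_of_nonneg_right hk (sq_nonneg M), mul_nonneg (sq_nonneg M) hP]
    _ ≤ (2 * (M ^ 2 + 1)) ^ q * (P ^ (q / 2) + q ^ (q / 2)) :=
        mul_add_rpow_half_le (sq_nonneg M) hP hq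
    _ ≤ _ := mul_le_mul_of_nonneg_left (by linarith) (by positivity)

/-- Row-norm moment estimate: for each `M > 0` and aspect ratio `a ≥ 1` there is a
constant `C > 0` such that, whenever `x₁, …, x_n` are independent, mean-zero random
variables bounded by `M` with `E[x_j²] ≤ p = N^{-1+αε}` and `n ≤ N ≤ a·n`, then for every
`q ≥ 2`,
`E[(Σ_j x_j²)^{q/2}] ≤ C^q·((N^{αε})^{q/2} + q^{q/2}·N + q^{q/4}·(N^{αε})^{q/4})`. -/
theorem row_norm_moment_bound (M a : ℝ) (hM : 0 < M) (ha : 1 ≤ a) :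
    ∃ C : ℝ, 0 < C ∧
      ∀ (α ε : ℝ), 0 < α → 0 < ε →
      ∀ (N n : ℕ), 0 < n → n ≤ N → (N : ℝ) ≤ a * n →
      ∀ {Ω : Type} [MeasurableSpace Ω] (μ : Measure Ω), IsProbabilityMeasure μ →
      ∀ x : Fin n → Ω → ℝ, (∀ j, Measurable (x j)) →
        iIndepFun x μ →
        (∀ j ω, |x j ω| ≤ M) →
        (∀ j, ∫ ω, x j ω ∂μ = 0) →
        (∀ j, ∫ ω, (x j ω) ^ 2 ∂μ ≤ (N : ℝ) ^ (-1 + α * ε)) →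
      ∀ q : ℝ, 2 ≤ q →
        ∫ ω, (∑ j, (x j ω) ^ 2) ^ (q / 2) ∂μ
          ≤ C ^ q * (((N : ℝ) ^ (α * ε)) ^ (q / 2) + q ^ (q / 2) * N
              + q ^ (q / 4) * ((N : ℝ) ^ (α * ε)) ^ (q / 4)) :=
  row_norm_moment_bound_general M a
end
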